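/- Let 0 < r ≤ M/2 and k = ⌊M/2⌋. For π ∈ A_n(M,r) with successive ranks r_i, define colors c(i) = (r_i + r − 1)/2 if α_i ≡ r (mod 2) and c(i) = (r_i + r)/2 otherwise, where α_i = π_i + π'_i − 2i + 1. Then 1 ≤ c(i) ≤ k−1 for all i, i.e., the colors lie in {1,…,k−1}. -/

import Mathlib

/-- The conjugate partition: `conj π i = #{j ≥ 1 : π j ≥ i}`. -/
noncomputable def conj (π : ℕ → ℕ) (i : ℕ) : ℕ := {j : ℕ | 1 ≤ j ∧ i ≤ π j}.ncard

/-- A partition, as a function from part indices (starting at 1) to part sizes: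
nonincreasing on indices ≥ 1, eventually zero, with the unused index 0 set to 0. -/
def IsPartition (π : ℕ → ℕ) : Prop :=
  π 0 = 0 ∧ (∀ i j, 1 ≤ i → i ≤ j → π j ≤ π i) ∧ ∃ N, ∀ j, N ≤ j → π j = 0

/-- The number partitioned, i.e. the sum of all parts. -/
noncomputable def size (π : ℕ → ℕ) : ℕ := ∑' j, π j

/-- The Durfee square size: the largest `d` with `π d ≥ d`. -/
noncomputable def durfee (π : ℕ → ℕ) : ℕ := sSup {d : ℕ | d ≤ π d}

/-- The number of parts. -/
noncomputable def len (π : ℕ → ℕ) : ℕ := conj π 1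

/-- The `i`-th successive rank `r_i = π_i - π'_i`. -/
noncomputable def rank (π : ℕ → ℕ) (i : ℕ) : ℤ := (π i : ℤ) - (conj π i : ℤ)

/-- The `i`-th angle (hook) length `α_i = π_i + π'_i - 2 i + 1`, as an integer. -/
noncomputable def ang (π : ℕ → ℕ) (i : ℕ) : ℤ := (π i : ℤ) + (conj π i : ℤ) - 2 * i + 1

/-- The partition `α(π)` of angle lengths: `α_i = π_i + π'_i - 2 i + 1` for `1 ≤ i ≤ d(π)`,
and `0` outside that range. -/
noncomputable def angPart (π : ℕ → ℕ) (i : ℕ) : ℕ :=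
  if 1 ≤ i ∧ i ≤ durfee π then π i + conj π i + 1 - 2 * i else 0

/-- The color assigned to the `i`-th angle: `(r_i + r - 1)/2` if `α_i ≡ r (mod 2)`,
`(r_i + r)/2` otherwise (and `0` outside the range `1 ≤ i ≤ d(π)`). -/
noncomputable def colorOf (r : ℕ) (π : ℕ → ℕ) (i : ℕ) : ℕ :=
  if 1 ≤ i ∧ i ≤ durfee π then
    (if angPart π i % 2 = r % 2 then ((rank π i + r - 1) / 2).toNat
     else ((rank π i + r) / 2).toNat)
  else 0

/-- `A_n(M,r)`: partitions of `n` with all successive ranks in `[-r+2, M-r-2]`. -/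
def Aset (n M r : ℕ) : Set (ℕ → ℕ) :=
  {π | IsPartition π ∧ size π = n ∧
    ∀ i, 1 ≤ i → i ≤ durfee π → -(r : ℤ) + 2 ≤ rank π i ∧ rank π i ≤ (M : ℤ) - r - 2}


/-!
Since `α_i + r_i = 2 (π_i - i) + 1` is odd, the numerator chosen by the colouring rule,
`r_i + r - 1` or `r_i + r`, is always the even one of the two. The rank bounds
`2 - r ≤ r_i ≤ M - r - 2` put it in `[1, M - 2]`, so being even it lies in `[2, M - 2]`,
and its half lies in `[1, M/2 - 1]`.
-/

section Durfee

variable {π : ℕ → ℕ}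

theorem bddAbove_setOf_le_apply (hπ : ∃ N, ∀ j, N ≤ j → π j = 0) :
    BddAbove {d : ℕ | d ≤ π d} := by
  obtain ⟨N, hN⟩ := hπ
  refine ⟨N, fun d hd => ?_⟩
  by_contra! h
  have : π d = 0 := hN d h.le
  simp only [Set.mem_ofPred_eq] at hd
  omega

theorem finite_setOf_le_apply {i : ℕ} (hi : 1 ≤ i) (hπ : ∃ N, ∀ j, N ≤ j → π j = 0) :
    {j : ℕ | 1 ≤ j ∧ i ≤ π j}.Finite := by
  obtain ⟨N, hN⟩ := hπ
  refine (Set.finite_Iio N).subset fun j hj => Set.mem_Iio.2 ?_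
  by_contra! h
  have : π j = 0 := hN j h
  simp only [Set.mem_ofPred_eq] at hj
  omega

theorem durfee_le_apply_durfee (hπ : ∃ N, ∀ j, N ≤ j → π j = 0) :
    durfee π ≤ π (durfee π) :=
  Nat.sSup_mem (s := {d : ℕ | d ≤ π d}) ⟨0, Nat.zero_le _⟩ (bddAbove_setOf_le_apply hπ)

theorem IsPartition.durfee_le_apply {j : ℕ} (hπ : IsPartition π) (hj : 1 ≤ j)
    (hjd : j ≤ durfee π) : durfee π ≤ π j :=
  (durfee_le_apply_durfee hπ.2.2).trans (hπ.2.1 j (durfee π) hj hjd)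

theorem IsPartition.durfee_le_conj {i : ℕ} (hπ : IsPartition π) (hi : 1 ≤ i)
    (hid : i ≤ durfee π) : durfee π ≤ conj π i := by
  have hsub : Set.Icc 1 (durfee π) ⊆ {j : ℕ | 1 ≤ j ∧ i ≤ π j} := fun j hj =>
    ⟨hj.1, hid.trans (hπ.durfee_le_apply hj.1 hj.2)⟩
  have hcard := Set.ncard_le_ncard hsub (finite_setOf_le_apply hi hπ.2.2)
  rw [Set.ncard_eq_toFinset_card', Set.toFinset_Icc, Nat.card_Icc] at hcard
  unfold conj
  omega

theorem IsPartition.angPart_eq_ang {i : ℕ} (hπ : IsPartition π) (hi : 1 ≤ i)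
    (hid : i ≤ durfee π) : (angPart π i : ℤ) = ang π i := by
  have hrow := hπ.durfee_le_apply hi hid
  have hcol := hπ.durfee_le_conj hi hid
  rw [angPart, if_pos ⟨hi, hid⟩, ang]
  omega

end Durfee

theorem ang_add_rank (π : ℕ → ℕ) (i : ℕ) : ang π i + rank π i = 2 * ((π i : ℤ) - i) + 1 := by
  rw [ang, rank]
  ring

theorem stmt10_general (n M r : ℕ)
    (π : ℕ → ℕ) (hπ : π ∈ Aset n M r) :
    ∀ i, 1 ≤ i → i ≤ durfee π → 1 ≤ colorOf r π i ∧ colorOf r π i ≤ M / 2 - 1 := by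
  obtain ⟨hπ, -, hranks⟩ := hπ
  intro i hi hid
  obtain ⟨hlow, hhigh⟩ := hranks i hi hid
  have hang := hπ.angPart_eq_ang hi hid
  have hodd := ang_add_rank π i
  rw [colorOf, if_pos ⟨hi, hid⟩]
  split_ifs <;> omega

theorem stmt10 (n M r : ℕ) (hr : 0 < r) (hM : 2 * r ≤ M)
    (π : ℕ → ℕ) (hπ : π ∈ Aset n M r) :
    ∀ i, 1 ≤ i → i ≤ durfee π → 1 ≤ colorOf r π i ∧ colorOf r π i ≤ M / 2 - 1 :=
  stmt10_general n M r π hπ
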